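/- Let α₁, α₂, α₃, β₁, β₂, β₃ be real numbers with α₁ > 0, α₃ > 0, α₁α₃ − α₂² = 0, and suppose the scenario-A3 sign condition holds: β₁β₃ ≤ 0. Assume ρ := α₁β₃ + α₃β₁ − 2α₂β₂ > 0. Then for every real k with k > max{−β₁/α₁, −β₃/α₃, (β₂² − β₁β₃)/ρ}, the 2×2 real symmetric matrix k·!![α₁, α₂; α₂, α₃] + !![β₁, β₂; β₂, β₃] is positive definite. -/

import Mathlib

/-!
The (1,1) entry of `k A + B` is `k α₁ + β₁`, positive once `k > -β₁/α₁`. Its determinant is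
`k² det A + k ρ + det B`, and since `det A = 0` this is the affine function `k ρ + β₁β₃ - β₂²`,
positive once `k > (β₂² - β₁β₃)/ρ`. A symmetric 2×2 matrix with positive (1,1) entry and positive
determinant is positive definite.
-/

open Matrix

theorem posDef_fin_two_of_pos_of_det_pos {a b d : ℝ} (ha : 0 < a) (hdet : 0 < a * d - b ^ 2) :
    (!![a, b; b, d]).PosDef := by
  refine PosDef.of_dotProduct_mulVec_pos ?_ fun x hx => ?_
  · ext i j
    fin_cases i <;> fin_cases j <;> rfl
  have hsquare : a * (star x ⬝ᵥ (!![a, b; b, d] *ᵥ x)) =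
      (a * x 0 + b * x 1) ^ 2 + (a * d - b ^ 2) * x 1 ^ 2 := by
    simp [dotProduct, mulVec, Fin.sum_univ_two]
    ring
  have hsum : 0 < (a * x 0 + b * x 1) ^ 2 + (a * d - b ^ 2) * x 1 ^ 2 := by
    by_cases h1 : x 1 = 0
    · have h0 : x 0 ≠ 0 := fun h0 => hx (funext fun i => by fin_cases i <;> simp [h0, h1])
      simpa [h1] using sq_pos_of_ne_zero (mul_ne_zero ha.ne' h0)
    · positivity
  exact pos_of_mul_pos_right (hsquare ▸ hsum) ha.le

theorem smul_add_fin_two {R : Type*} [Semiring R] (k a₁ a₂ a₃ b₁ b₂ b₃ : R) :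
    k • !![a₁, a₂; a₂, a₃] + !![b₁, b₂; b₂, b₃] =
      !![k * a₁ + b₁, k * a₂ + b₂; k * a₂ + b₂, k * a₃ + b₃] := by
  simp [smul_of, of_add_of]

theorem stmt_2_general (α₁ α₂ α₃ β₁ β₂ β₃ : ℝ)
    (hα₁ : 0 < α₁) (hαdet : α₁ * α₃ - α₂ ^ 2 = 0)
    (hρ : 0 < α₁ * β₃ + α₃ * β₁ - 2 * α₂ * β₂) :
    ∀ k : ℝ,
      max (max (-β₁ / α₁) (-β₃ / α₃))
          ((β₂ ^ 2 - β₁ * β₃) / (α₁ * β₃ + α₃ * β₁ - 2 * α₂ * β₂)) < k →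
      (k • !![α₁, α₂; α₂, α₃] + !![β₁, β₂; β₂, β₃]).PosDef := by
  intro k hk
  obtain ⟨⟨hk₁, -⟩, hkρ⟩ := by simpa only [max_lt_iff] using hk
  rw [smul_add_fin_two]
  refine posDef_fin_two_of_pos_of_det_pos ?_ ?_
  · linarith [(div_lt_iff₀ hα₁).mp hk₁]
  · have hdet : (k * α₁ + β₁) * (k * α₃ + β₃) - (k * α₂ + β₂) ^ 2 =
        k ^ 2 * (α₁ * α₃ - α₂ ^ 2) + k * (α₁ * β₃ + α₃ * β₁ - 2 * α₂ * β₂) +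
          (β₁ * β₃ - β₂ ^ 2) := by ring
    rw [hdet, hαdet]
    linarith [(div_lt_iff₀ hρ).mp hkρ]

theorem stmt_2 (α₁ α₂ α₃ β₁ β₂ β₃ : ℝ)
    (hα₁ : 0 < α₁) (hα₃ : 0 < α₃) (hαdet : α₁ * α₃ - α₂ ^ 2 = 0)
    (hβ : β₁ * β₃ ≤ 0)
    (hρ : 0 < α₁ * β₃ + α₃ * β₁ - 2 * α₂ * β₂) :
    ∀ k : ℝ,
      max (max (-β₁ / α₁) (-β₃ / α₃))
          ((β₂ ^ 2 - β₁ * β₃) / (α₁ * β₃ + α₃ * β₁ - 2 * α₂ * β₂)) < k →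
      (k • !![α₁, α₂; α₂, α₃] + !![β₁, β₂; β₂, β₃]).PosDef :=
  stmt_2_general α₁ α₂ α₃ β₁ β₂ β₃ hα₁ hαdet hρ
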